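/- (Theorem 2, second part) Suppose the torque vector b₁ is constant on [0,L]. Then at every s ∈ [0,L] with (f₁(s), f₂(s)) ≠ (0,0) one has ⟨γ(s), T(s)⟩ = 0; in particular, if the set of such points is dense in [0,L] (γ does not define an elastic strip on any subinterval), then ‖γ(s)‖ is constant on [0,L]. -/

import Mathlib

open scoped RealInnerProductSpace
open Set

noncomputable section

/-- Euclidean 3-space. -/
abbrev E3 : Type := EuclideanSpace ℝ (Fin 3)

/-- Cross product on `E3`. -/
def cross (v w : E3) : E3 :=
  (WithLp.equiv 2 (Fin 3 → ℝ)).symm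
    (crossProduct ((WithLp.equiv 2 (Fin 3 → ℝ)) v) ((WithLp.equiv 2 (Fin 3 → ℝ)) w))

/-- `a₁ = ½(κ²(1+λ²)² + μ)`. -/
def a1 (κ lam : ℝ → ℝ) (μ : ℝ) (s : ℝ) : ℝ :=
  (κ s ^ 2 * (1 + lam s ^ 2) ^ 2 + μ) / 2

/-- `a₂ = κ'(1+λ²)² + 2κ(1+λ²)λλ'`. -/
def a2 (κ lam : ℝ → ℝ) (s : ℝ) : ℝ :=
  deriv κ s * (1 + lam s ^ 2) ^ 2 + 2 * κ s * (1 + lam s ^ 2) * lam s * deriv lam s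

/-- `a₃ = −(κ²(1+λ²)²λ + ((κ'/κ)·2λ(1+λ²))' + (2λ(1+λ²))'')`. -/
def a3 (κ lam : ℝ → ℝ) (s : ℝ) : ℝ :=
  -(κ s ^ 2 * (1 + lam s ^ 2) ^ 2 * lam s
    + deriv (fun u => deriv κ u / κ u * (2 * lam u * (1 + lam u ^ 2))) s
    + deriv (deriv (fun u => 2 * lam u * (1 + lam u ^ 2))) s)

/-- Euler–Lagrange expression `f₁ = a₂' + κa₁ − κλa₃`. -/
def f1 (κ lam : ℝ → ℝ) (μ : ℝ) (s : ℝ) : ℝ :=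
  deriv (a2 κ lam) s + κ s * a1 κ lam μ s - κ s * lam s * a3 κ lam s

/-- Euler–Lagrange expression `f₂ = a₃' + κλa₂`. -/
def f2 (κ lam : ℝ → ℝ) (s : ℝ) : ℝ :=
  deriv (a3 κ lam) s + κ s * lam s * a2 κ lam s

/-- `s₁ = 2κλ(1+λ²)`. -/
def s1 (κ lam : ℝ → ℝ) (s : ℝ) : ℝ := 2 * κ s * lam s * (1 + lam s ^ 2)

/-- `s₂ = s₁'/κ`. -/
def s2 (κ lam : ℝ → ℝ) (s : ℝ) : ℝ := deriv (s1 κ lam) s / κ s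

/-- `s₃ = κ(1+λ²)(1−λ²)`. -/
def s3 (κ lam : ℝ → ℝ) (s : ℝ) : ℝ := κ s * (1 + lam s ^ 2) * (1 - lam s ^ 2)

/-- The force vector `b₀ = a₁T + a₂N + a₃B`. -/
def b0vec (κ lam : ℝ → ℝ) (μ : ℝ) (T N B : ℝ → E3) (s : ℝ) : E3 :=
  a1 κ lam μ s • T s + a2 κ lam s • N s + a3 κ lam s • B s

/-- `J = s₁T + s₂N + s₃B`. -/
def Jvec (κ lam : ℝ → ℝ) (T N B : ℝ → E3) (s : ℝ) : E3 :=
  s1 κ lam s • T s + s2 κ lam s • N s + s3 κ lam s • B s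

/-- The torque vector `b₁ = J − γ × b₀`. -/
def b1vec (κ lam : ℝ → ℝ) (μ : ℝ) (γ T N B : ℝ → E3) (s : ℝ) : E3 :=
  Jvec κ lam T N B s - cross (γ s) (b0vec κ lam μ T N B s)
section CrossLemmas

lemma cross_apply' (v w : E3) (i : Fin 3) :
    cross v w i = ![v 1 * w 2 - v 2 * w 1, v 2 * w 0 - v 0 * w 2, v 0 * w 1 - v 1 * w 0] i := rfl

/-- The cross product as a continuous bilinear map. -/
def crossL : E3 →L[ℝ] E3 →L[ℝ] E3 :=
  LinearMap.toContinuousLinearMap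
    { toFun := fun v => LinearMap.toContinuousLinearMap
        { toFun := fun w => cross v w
          map_add' := by intro x y; simp [cross, map_add]
          map_smul' := by intro c x; simp [cross, map_smul] }
      map_add' := by
        intro x y; ext w i
        simp [cross, map_add]
      map_smul' := by
        intro c x; ext w i
        simp [cross, map_smul] }

lemma cross_eq (v w : E3) : cross v w = crossL v w := rfl

lemma cross_add_right (a b c : E3) : cross a (b + c) = cross a b + cross a c := by
  simp only [cross_eq, map_add]

lemma cross_smul_right (r : ℝ) (a b : E3) : cross a (r • b) = r • cross a b := by
  simp only [cross_eq, map_smul]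

lemma inner_apply' (v w : E3) : ⟪v, w⟫ = ∑ i, v i * w i := by
  simp [PiLp.inner_apply, mul_comm]

lemma cross_triple (a b c : E3) : ⟪cross a b, c⟫ = ⟪a, cross b c⟫ := by
  simp only [inner_apply', Fin.sum_univ_three, cross_apply']
  norm_num [Matrix.cons_val_zero, Matrix.cons_val_one, Matrix.cons_val_two]
  ring

lemma fin3_0 : (⟨0, by omega⟩ : Fin 3) = 0 := rfl
lemma fin3_1 : (⟨1, by omega⟩ : Fin 3) = 1 := rfl
lemma fin3_2 : (⟨2, by omega⟩ : Fin 3) = 2 := rfl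

lemma crossCross (a b c : E3) : cross a (cross b c) = ⟪a,c⟫ • b - ⟪a,b⟫ • c := by
  ext i
  fin_cases i <;>
  · simp only [inner_apply', Fin.sum_univ_three, cross_apply', PiLp.sub_apply, PiLp.smul_apply,
      smul_eq_mul, fin3_0, fin3_1, fin3_2]
    norm_num [Matrix.cons_val_zero, Matrix.cons_val_one, Matrix.cons_val_two]
    ring

lemma cross_self' (a : E3) : cross a a = 0 := by
  ext i
  fin_cases i <;>
  · simp only [cross_apply', fin3_0, fin3_1, fin3_2]
    norm_num [Matrix.cons_val_zero, Matrix.cons_val_one, Matrix.cons_val_two]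
    ring

lemma cross_skew (a b : E3) : cross a b = -cross b a := by
  ext i
  fin_cases i <;>
  · simp only [cross_apply', fin3_0, fin3_1, fin3_2, PiLp.neg_apply]
    norm_num [Matrix.cons_val_zero, Matrix.cons_val_one, Matrix.cons_val_two]
    ring

lemma inner_cross_right' (a b : E3) : ⟪cross a b, b⟫ = 0 := by
  simp only [inner_apply', Fin.sum_univ_three, cross_apply']
  norm_num [Matrix.cons_val_zero, Matrix.cons_val_one, Matrix.cons_val_two]
  ring

lemma hasDerivAt_cross {u v : ℝ → E3} {u' v' : E3} {x : ℝ}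
    (hu : HasDerivAt u u' x) (hv : HasDerivAt v v' x) :
    HasDerivAt (fun s => cross (u s) (v s)) (cross u' (v x) + cross (u x) v') x := by
  have h1 : HasDerivAt (fun s => crossL (u s)) (crossL u') x :=
    crossL.hasFDerivAt.comp_hasDerivAt x hu
  simpa [cross_eq] using h1.clm_apply hv

end CrossLemmas
open scoped ContDiff in
/-- **Theorem 2, second part.** Suppose the torque vector `b₁` is constant
on `[0,L]`. Then at every `s ∈ [0,L]` with `(f₁(s), f₂(s)) ≠ (0,0)` one has
`⟨γ(s), T(s)⟩ = 0`; in particular, if the set of such points is dense in `[0,L]`,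
then `‖γ‖` is constant on `[0,L]`. -/
theorem stmt4
    (L : ℝ) (hL : 0 < L)
    (γ T N B : ℝ → E3) (κ τ lam : ℝ → ℝ) (μ : ℝ)
    (hγ : ContDiff ℝ (⊤ : ℕ∞) γ) (hκsm : ContDiff ℝ (⊤ : ℕ∞) κ) (hτsm : ContDiff ℝ (⊤ : ℕ∞) τ)
    (hT : ∀ s, T s = deriv γ s)
    (hunit : ∀ s, ‖deriv γ s‖ = 1)
    (hκ : ∀ s, κ s = ‖deriv (deriv γ) s‖)
    (hκpos : ∀ s, 0 < κ s)
    (hN : ∀ s, N s = (κ s)⁻¹ • deriv T s)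
    (hB : ∀ s, B s = cross (T s) (N s))
    (hfrN : ∀ s, deriv N s = (-(κ s)) • T s + τ s • B s)
    (hfrB : ∀ s, deriv B s = (-(τ s)) • N s)
    (hlam : ∀ s, lam s = τ s / κ s)
    (hb1const : ∃ c : E3, ∀ s ∈ Set.Icc (0 : ℝ) L, b1vec κ lam μ γ T N B s = c) :
    (∀ s ∈ Set.Icc (0 : ℝ) L, (f1 κ lam μ s ≠ 0 ∨ f2 κ lam s ≠ 0) → ⟪γ s, T s⟫ = 0) ∧
    ((∀ s ∈ Set.Icc (0 : ℝ) L,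
        s ∈ closure {x | x ∈ Set.Icc (0 : ℝ) L ∧ (f1 κ lam μ x ≠ 0 ∨ f2 κ lam x ≠ 0)}) →
      ∃ r : ℝ, ∀ s ∈ Set.Icc (0 : ℝ) L, ‖γ s‖ = r) := by
  obtain ⟨c, hc⟩ := hb1const
  replace hγ : ContDiff ℝ ∞ γ := hγ.of_le (by simp)
  replace hκsm : ContDiff ℝ ∞ κ := hκsm.of_le (by simp)
  replace hτsm : ContDiff ℝ ∞ τ := hτsm.of_le (by simp)
  have hκne : ∀ s, κ s ≠ 0 := fun s => (hκpos s).ne'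
  have hτκ : ∀ s, τ s = κ s * lam s := by
    intro s; rw [hlam, mul_comm, div_mul_cancel₀ (τ s) (hκne s)]
  -- basic smoothness
  have hTeq : T = deriv γ := funext hT
  have hγdiff : Differentiable ℝ γ := hγ.differentiable (by simp)
  have hTC : ContDiff ℝ ∞ T := hTeq ▸ (contDiff_infty_iff_deriv.mp hγ).2
  have hγd : ∀ s, HasDerivAt γ (T s) s := fun s => (hT s) ▸ (hγdiff s).hasDerivAt
  have hlamC : ContDiff ℝ ∞ lam := by
    have h : lam = fun s => τ s / κ s := funext hlam
    rw [h]; exact hτsm.div hκsm hκne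
  have hκ'C : ContDiff ℝ ∞ (deriv κ) := (contDiff_infty_iff_deriv.mp hκsm).2
  have hlam'C : ContDiff ℝ ∞ (deriv lam) := (contDiff_infty_iff_deriv.mp hlamC).2
  have hT'C : ContDiff ℝ ∞ (deriv T) := (contDiff_infty_iff_deriv.mp hTC).2
  have hNeq : N = fun s => (κ s)⁻¹ • deriv T s := funext hN
  have hNC : ContDiff ℝ ∞ N := by rw [hNeq]; exact (hκsm.inv hκne).smul hT'C
  have hBeq : B = fun s => crossL (T s) (N s) := funext fun s => (hB s).trans (cross_eq _ _)
  have hBC : ContDiff ℝ ∞ B := by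
    rw [hBeq]; exact (crossL.contDiff.comp hTC).clm_apply hNC
  -- derivatives of the frame
  have hTd : ∀ s, HasDerivAt T (κ s • N s) s := by
    intro s
    have h := (hTC.differentiable (by simp) s).hasDerivAt
    have h2 : κ s • N s = deriv T s := by
      rw [hN, smul_smul, mul_inv_cancel₀ (hκne s), one_smul]
    rwa [h2]
  have hNd : ∀ s, HasDerivAt N ((-(κ s)) • T s + τ s • B s) s := fun s =>
    (hfrN s) ▸ (hNC.differentiable (by simp) s).hasDerivAt
  have hBd : ∀ s, HasDerivAt B ((-(τ s)) • N s) s := fun s =>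
    (hfrB s) ▸ (hBC.differentiable (by simp) s).hasDerivAt
  have hκd : ∀ s, HasDerivAt κ (deriv κ s) s := fun s =>
    (hκsm.differentiable (by simp) s).hasDerivAt
  have hlamd : ∀ s, HasDerivAt lam (deriv lam s) s := fun s =>
    (hlamC.differentiable (by simp) s).hasDerivAt
  -- orthonormality
  have hTT : ∀ s, ⟪T s, T s⟫ = 1 := by
    intro s
    rw [real_inner_self_eq_norm_sq, hT, hunit]; norm_num
  have hNT : ∀ s, ⟪N s, T s⟫ = 0 := by
    intro s
    have h1 : HasDerivAt (fun u => ⟪T u, T u⟫) (⟪T s, κ s • N s⟫ + ⟪κ s • N s, T s⟫) s :=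
      (hTd s).inner ℝ (hTd s)
    have h2 : (fun u => ⟪T u, T u⟫) = fun _ : ℝ => (1:ℝ) := funext hTT
    have h3 : HasDerivAt (fun _ : ℝ => (1:ℝ)) 0 s := hasDerivAt_const s 1
    have h4 := h1.unique (h2 ▸ h3)
    rw [real_inner_smul_right, real_inner_smul_left, real_inner_comm (N s) (T s)] at h4
    have h5 : κ s * (2 * ⟪N s, T s⟫) = 0 := by linarith
    rcases mul_eq_zero.mp h5 with h | h
    · exact absurd h (hκne s)
    · linarith
  have hTN : ∀ s, ⟪T s, N s⟫ = 0 := fun s => by rw [real_inner_comm]; exact hNT s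
  have hNN : ∀ s, ⟪N s, N s⟫ = 1 := by
    intro s
    have hnorm : ‖N s‖ = 1 := by
      rw [hN, norm_smul, hTeq, ← hκ s]
      rw [norm_inv, Real.norm_eq_abs, abs_of_pos (hκpos s), inv_mul_cancel₀ (hκne s)]
    rw [real_inner_self_eq_norm_sq, hnorm]; norm_num
  -- cross-product frame identities
  have hcTN : ∀ s, cross (T s) (N s) = B s := fun s => (hB s).symm
  have hcTB : ∀ s, cross (T s) (B s) = -(N s) := by
    intro s
    rw [hB, crossCross, hTT, hTN]
    simp
  have hcNB : ∀ s, cross (N s) (B s) = T s := by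
    intro s
    rw [hB, crossCross, hNN, hNT]
    simp
  -- scalar derivatives
  have hA1 : ∀ s, HasDerivAt (a1 κ lam μ) (κ s * a2 κ lam s) s := by
    intro s
    have h := ((((hκd s).pow 2).mul ((((hlamd s).pow 2).const_add 1).pow 2)).add_const μ).div_const 2
    convert h using 1 <;> try rfl
    simp only [a2]
    push_cast [Pi.pow_apply, Pi.mul_apply]
    ring
  have hA2C : ContDiff ℝ ∞ (a2 κ lam) := by
    have h : a2 κ lam = fun s =>
        deriv κ s * (1 + lam s ^ 2) ^ 2 + 2 * κ s * (1 + lam s ^ 2) * lam s * deriv lam s := rfl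
    rw [h]
    exact (hκ'C.mul ((contDiff_const.add (hlamC.pow 2)).pow 2)).add
      ((((((contDiff_const (c := (2:ℝ))).mul hκsm)).mul
        (contDiff_const.add (hlamC.pow 2))).mul hlamC).mul hlam'C)
  have hA2 : ∀ s, HasDerivAt (a2 κ lam) (deriv (a2 κ lam) s) s := fun s =>
    (hA2C.differentiable (by simp) s).hasDerivAt
  -- the auxiliary functions appearing in a3
  have hgC : ContDiff ℝ ∞ (fun u => 2 * lam u * (1 + lam u ^ 2)) :=
    ((contDiff_const (c := (2:ℝ))).mul hlamC).mul (contDiff_const.add (hlamC.pow 2))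
  have hg'C : ContDiff ℝ ∞ (deriv (fun u => 2 * lam u * (1 + lam u ^ 2))) :=
    (contDiff_infty_iff_deriv.mp hgC).2
  have hg''C : ContDiff ℝ ∞ (deriv (deriv (fun u => 2 * lam u * (1 + lam u ^ 2)))) :=
    (contDiff_infty_iff_deriv.mp hg'C).2
  have hh1C : ContDiff ℝ ∞ (fun u => deriv κ u / κ u * (2 * lam u * (1 + lam u ^ 2))) :=
    (hκ'C.div hκsm hκne).mul hgC
  have hh1'C : ContDiff ℝ ∞ (deriv (fun u => deriv κ u / κ u * (2 * lam u * (1 + lam u ^ 2)))) :=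
    (contDiff_infty_iff_deriv.mp hh1C).2
  have hA3C : ContDiff ℝ ∞ (a3 κ lam) := by
    have h : a3 κ lam = fun s => -(κ s ^ 2 * (1 + lam s ^ 2) ^ 2 * lam s
        + deriv (fun u => deriv κ u / κ u * (2 * lam u * (1 + lam u ^ 2))) s
        + deriv (deriv (fun u => 2 * lam u * (1 + lam u ^ 2))) s) := rfl
    rw [h]
    exact ((((hκsm.pow 2).mul ((contDiff_const.add (hlamC.pow 2)).pow 2)).mul hlamC).add
      (hh1'C)).add hg''C |>.neg
  have hA3 : ∀ s, HasDerivAt (a3 κ lam) (deriv (a3 κ lam) s) s := fun s =>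
    (hA3C.differentiable (by simp) s).hasDerivAt
  -- derivative of b0vec
  have hb0d : ∀ s, HasDerivAt (b0vec κ lam μ T N B)
      (f1 κ lam μ s • N s + f2 κ lam s • B s) s := by
    intro s
    have h := (((hA1 s).smul (hTd s)).add ((hA2 s).smul (hNd s))).add ((hA3 s).smul (hBd s))
    have hfun : b0vec κ lam μ T N B =
        fun u => a1 κ lam μ u • T u + a2 κ lam u • N u + a3 κ lam u • B u := rfl
    rw [hfun]
    convert h using 1 <;> try rfl
    simp only [f1, f2, hτκ s]
    module
  -- derivative of g and s1
  have hgd : ∀ s, HasDerivAt (fun u => 2 * lam u * (1 + lam u ^ 2))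
      (deriv (fun u => 2 * lam u * (1 + lam u ^ 2)) s) s := fun s =>
    (hgC.differentiable (by simp) s).hasDerivAt
  have hgderiv : ∀ s, deriv (fun u => 2 * lam u * (1 + lam u ^ 2)) s
      = 2 * deriv lam s * (1 + lam s ^ 2) + 2 * lam s * (2 * lam s * deriv lam s) := by
    intro s
    have h := ((hasDerivAt_const s (2:ℝ)).mul (hlamd s)).mul (((hlamd s).pow 2).const_add 1)
    have h2 := h.deriv
    erw [h2]
    push_cast [Pi.pow_apply, Pi.mul_apply]
    ring
  have hs1eq : s1 κ lam = fun u => κ u * (2 * lam u * (1 + lam u ^ 2)) := by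
    funext u; simp only [s1]; ring
  have hs1deriv : ∀ s, deriv (s1 κ lam) s =
      deriv κ s * (2 * lam s * (1 + lam s ^ 2))
        + κ s * deriv (fun u => 2 * lam u * (1 + lam u ^ 2)) s := by
    intro s
    rw [hs1eq]
    exact ((hκd s).mul (hgd s)).deriv
  have hs1C : ContDiff ℝ ∞ (s1 κ lam) := by rw [hs1eq]; exact hκsm.mul hgC
  have hs1d : ∀ s, HasDerivAt (s1 κ lam) (deriv (s1 κ lam) s) s := fun s =>
    (hs1C.differentiable (by simp) s).hasDerivAt
  -- s2 rewritten
  have hs2eq : s2 κ lam = fun u => deriv κ u / κ u * (2 * lam u * (1 + lam u ^ 2))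
      + deriv (fun u => 2 * lam u * (1 + lam u ^ 2)) u := by
    funext u
    simp only [s2, hs1deriv u]
    field_simp [hκne u]
  have hs2d : ∀ s, HasDerivAt (s2 κ lam)
      (deriv (fun u => deriv κ u / κ u * (2 * lam u * (1 + lam u ^ 2))) s
        + deriv (deriv (fun u => 2 * lam u * (1 + lam u ^ 2))) s) s := by
    intro s
    rw [hs2eq]
    exact ((hh1C.differentiable (by simp) s).hasDerivAt).add
      ((hg'C.differentiable (by simp) s).hasDerivAt)
  -- s3 explicit derivative
  have hs3d : ∀ s, HasDerivAt (s3 κ lam)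
      (deriv κ s * ((1 + lam s ^ 2) * (1 - lam s ^ 2))
        + κ s * ((2 * lam s * deriv lam s) * (1 - lam s ^ 2)
          + (1 + lam s ^ 2) * (-(2 * lam s * deriv lam s)))) s := by
    intro s
    have h := (hκd s).mul ((((hlamd s).pow 2).const_add 1).mul
      (((hlamd s).pow 2).const_sub 1))
    have hfun : s3 κ lam = fun u => κ u * ((1 + lam u ^ 2) * (1 - lam u ^ 2)) := by
      funext u; simp only [s3]; ring
    rw [hfun]
    convert h using 1 <;> try rfl
    push_cast [Pi.pow_apply, Pi.mul_apply]
    ring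
  -- scalar coefficient identities for J'
  have e1 : ∀ s, deriv (s1 κ lam) s - κ s * s2 κ lam s = 0 := by
    intro s
    simp only [s2]
    rw [mul_comm, div_mul_cancel₀ _ (hκne s), sub_self]
  have e2 : ∀ s, deriv (fun u => deriv κ u / κ u * (2 * lam u * (1 + lam u ^ 2))) s
      + deriv (deriv (fun u => 2 * lam u * (1 + lam u ^ 2))) s
      + κ s * s1 κ lam s - τ s * s3 κ lam s = -(a3 κ lam s) := by
    intro s
    simp only [a3, s1, s3, hτκ s]
    ring
  have e3 : ∀ s, deriv κ s * ((1 + lam s ^ 2) * (1 - lam s ^ 2))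
      + κ s * ((2 * lam s * deriv lam s) * (1 - lam s ^ 2)
        + (1 + lam s ^ 2) * (-(2 * lam s * deriv lam s)))
      + τ s * s2 κ lam s = a2 κ lam s := by
    intro s
    simp only [s2, hs1deriv s, hgderiv s, hτκ s, a2]
    field_simp [hκne s]
    ring
  -- derivative of Jvec
  have hJd : ∀ s, HasDerivAt (Jvec κ lam T N B)
      ((-(a3 κ lam s)) • N s + a2 κ lam s • B s) s := by
    intro s
    have h := (((hs1d s).smul (hTd s)).add ((hs2d s).smul (hNd s))).add
      ((hs3d s).smul (hBd s))
    have hfun : Jvec κ lam T N B =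
        fun u => s1 κ lam u • T u + s2 κ lam u • N u + s3 κ lam u • B u := rfl
    rw [hfun]
    have e1' : deriv (s1 κ lam) s = κ s * s2 κ lam s := by
      simp only [s2]
      rw [mul_comm, div_mul_cancel₀ _ (hκne s)]
    convert h using 1 <;> try rfl
    rw [← e2 s, ← e3 s, e1']
    module
  -- cross T b0 = -a3 N + a2 B
  have hTb0 : ∀ s, cross (T s) (b0vec κ lam μ T N B s)
      = (-(a3 κ lam s)) • N s + a2 κ lam s • B s := by
    intro s
    simp only [b0vec, cross_add_right, cross_smul_right, hcTN s, hcTB s, cross_self']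
    module
  -- derivative of b1vec
  have hb1d : ∀ s, HasDerivAt (b1vec κ lam μ γ T N B)
      (-(cross (γ s) (f1 κ lam μ s • N s + f2 κ lam s • B s))) s := by
    intro s
    have hcd := hasDerivAt_cross (hγd s) (hb0d s)
    have h := (hJd s).sub hcd
    rw [hTb0 s] at h
    have hfun : b1vec κ lam μ γ T N B =
        fun u => Jvec κ lam T N B u - cross (γ u) (b0vec κ lam μ T N B u) := rfl
    rw [hfun]
    convert h using 1 <;> try rfl
    abel
  -- the derivative of b1vec vanishes on the open interval
  have hzero : ∀ s ∈ Ioo (0:ℝ) L,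
      cross (γ s) (f1 κ lam μ s • N s + f2 κ lam s • B s) = 0 := by
    intro s hs
    have hmem : Icc (0:ℝ) L ∈ nhds s := Icc_mem_nhds hs.1 hs.2
    have hconst : b1vec κ lam μ γ T N B =ᶠ[nhds s] fun _ => c := by
      filter_upwards [hmem] with x hx using hc x hx
    have h0 : HasDerivAt (b1vec κ lam μ γ T N B) 0 s :=
      (hasDerivAt_const s c).congr_of_eventuallyEq hconst
    have h := (hb1d s).unique h0
    simpa [neg_eq_zero] using h
  -- continuity of the relevant function
  have hf1c : Continuous (f1 κ lam μ) := by
    have h : f1 κ lam μ = fun s => deriv (a2 κ lam) s + κ s * a1 κ lam μ s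
        - κ s * lam s * a3 κ lam s := rfl
    rw [h]
    have ha1c : Continuous (a1 κ lam μ) := by
      have h2 : a1 κ lam μ = fun s => (κ s ^ 2 * (1 + lam s ^ 2) ^ 2 + μ) / 2 := rfl
      rw [h2]
      exact (((hκsm.continuous.pow 2).mul
        ((continuous_const.add (hlamC.continuous.pow 2)).pow 2)).add continuous_const).div_const 2
    exact (((contDiff_infty_iff_deriv.mp hA2C).2.continuous).add
      (hκsm.continuous.mul ha1c)).sub
      ((hκsm.continuous.mul hlamC.continuous).mul hA3C.continuous)
  have hf2c : Continuous (f2 κ lam) := by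
    have h : f2 κ lam = fun s => deriv (a3 κ lam) s + κ s * lam s * a2 κ lam s := rfl
    rw [h]
    exact ((contDiff_infty_iff_deriv.mp hA3C).2.continuous).add
      ((hκsm.continuous.mul hlamC.continuous).mul hA2C.continuous)
  have hFc : Continuous (fun s => cross (γ s) (f1 κ lam μ s • N s + f2 κ lam s • B s)) := by
    have h : (fun s => cross (γ s) (f1 κ lam μ s • N s + f2 κ lam s • B s))
        = fun s => crossL (γ s) (f1 κ lam μ s • N s + f2 κ lam s • B s) := rfl
    rw [h]
    exact (crossL.continuous.comp hγ.continuous).clm_apply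
      ((hf1c.smul hNC.continuous).add (hf2c.smul hBC.continuous))
  -- vanishing on the closed interval
  have hzeroIcc : ∀ s ∈ Icc (0:ℝ) L,
      cross (γ s) (f1 κ lam μ s • N s + f2 κ lam s • B s) = 0 := by
    intro s hs
    have hEq : EqOn (fun s => cross (γ s) (f1 κ lam μ s • N s + f2 κ lam s • B s))
        (fun _ => (0:E3)) (Ioo 0 L) := fun x hx => hzero x hx
    have h2 := hEq.closure hFc continuous_const
    rw [closure_Ioo hL.ne] at h2
    exact h2 hs
  -- first conclusion
  have main1 : ∀ s ∈ Set.Icc (0 : ℝ) L,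
      (f1 κ lam μ s ≠ 0 ∨ f2 κ lam s ≠ 0) → ⟪γ s, T s⟫ = 0 := by
    intro s hs hf
    have h0 := hzeroIcc s hs
    have hexp : cross (γ s) (f1 κ lam μ s • N s + f2 κ lam s • B s)
        = f1 κ lam μ s • cross (γ s) (N s) + f2 κ lam s • cross (γ s) (B s) := by
      rw [cross_add_right, cross_smul_right, cross_smul_right]
    rw [hexp] at h0
    have hB0 : f1 κ lam μ s * ⟪γ s, T s⟫ = 0 := by
      have h := congrArg (fun v => ⟪v, B s⟫) h0
      simp only [inner_zero_left, inner_add_left, real_inner_smul_left] at h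
      rw [cross_triple, hcNB s, inner_cross_right'] at h
      simpa using h
    have hN0 : f2 κ lam s * ⟪γ s, T s⟫ = 0 := by
      have h := congrArg (fun v => ⟪v, N s⟫) h0
      simp only [inner_zero_left, inner_add_left, real_inner_smul_left] at h
      rw [inner_cross_right', cross_triple, cross_skew (B s) (N s), hcNB s] at h
      simp only [inner_neg_right] at h
      linarith
    rcases hf with h | h
    · exact (mul_eq_zero.mp hB0).resolve_left h
    · exact (mul_eq_zero.mp hN0).resolve_left h
  refine ⟨main1, ?_⟩
  -- second conclusion
  intro hdense
  have hφ : ∀ s ∈ Icc (0:ℝ) L, ⟪γ s, T s⟫ = 0 := by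
    intro s hs
    have hsub : {x | x ∈ Icc (0:ℝ) L ∧ (f1 κ lam μ x ≠ 0 ∨ f2 κ lam x ≠ 0)}
        ⊆ {x | ⟪γ x, T x⟫ = (0:ℝ)} := fun x hx => main1 x hx.1 hx.2
    have hclosed : IsClosed {x | ⟪γ x, T x⟫ = (0:ℝ)} :=
      isClosed_eq (hγ.continuous.inner hTC.continuous) continuous_const
    exact hclosed.closure_subset (closure_mono hsub (hdense s hs))
  have hψd : ∀ s, HasDerivAt (fun u => ⟪γ u, γ u⟫) (2 * ⟪γ s, T s⟫) s := by
    intro s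
    have h := (hγd s).inner ℝ (hγd s)
    convert h using 1 <;> try rfl
    rw [real_inner_comm (T s) (γ s)]
    ring
  have hconst := constant_of_derivWithin_zero (f := fun u => ⟪γ u, γ u⟫) (a := (0:ℝ)) (b := L)
    (fun x _ => (hψd x).differentiableAt.differentiableWithinAt) ?_
  · refine ⟨‖γ 0‖, fun s hs => ?_⟩
    have h := hconst s hs
    have h3 : ‖γ s‖ * ‖γ s‖ = ‖γ 0‖ * ‖γ 0‖ := by
      rw [← real_inner_self_eq_norm_mul_norm, ← real_inner_self_eq_norm_mul_norm]
      exact h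
    exact (mul_self_inj (norm_nonneg _) (norm_nonneg _)).mp h3
  · intro x hx
    have h := (hψd x).hasDerivWithinAt (s := Icc (0:ℝ) L)
    rw [h.derivWithin (uniqueDiffOn_Icc hL x (Ico_subset_Icc_self hx))]
    rw [hφ x (Ico_subset_Icc_self hx)]
    ring
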